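/- For any z ∈ K and v = w + λ div z, one has ½‖w − v‖² + λ TV(v) ≥ ½(‖w‖² − ‖v‖²); hence if the duality gap δ(v) ≤ ε then v is an ε-optimal solution of the ROF problem: ½‖w−v‖² + λTV(v) ≤ min_u (½‖w−u‖² + λTV(u)) + ε. -/

import Mathlib

/-!
Weak duality for the discrete ROF model. For a dual field `z` with `‖z ω‖ ≤ 1` we have
`⟪grad u, z⟫ ≤ TV u`, and adjointness turns the left side into `-⟪u, div z⟫`; with
`v = w + λ div z` this gives `-⟪u, v - w⟫ ≤ λ TV u`. Completing the square,
`½‖w - u‖² = ½(‖w‖² - ‖v‖²) + ⟪u, v - w⟫ + ½‖u - v‖²`, so every primal value dominates the dual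
value `½(‖w‖² - ‖v‖²)`. Hence the duality gap at `v` bounds its distance to the optimum.
-/

open Finset

section WeakDuality

variable {Ω F : Type*} [Fintype Ω] [NormedAddCommGroup F] [InnerProductSpace ℝ F]

theorem sum_inner_le_sum_norm (g z : Ω → F) (hz : ∀ ω, ‖z ω‖ ≤ 1) :
    ∑ ω, inner ℝ (g ω) (z ω) ≤ ∑ ω, ‖g ω‖ :=
  sum_le_sum fun ω _ =>
    calc inner ℝ (g ω) (z ω) ≤ ‖g ω‖ * ‖z ω‖ := real_inner_le_norm _ _
      _ ≤ ‖g ω‖ := mul_le_of_le_one_right (norm_nonneg _) (hz ω)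

theorem sum_sub_sq_eq (w u v : Ω → ℝ) :
    ∑ ω, (w ω - u ω) ^ 2 = ∑ ω, w ω ^ 2 - ∑ ω, v ω ^ 2 + 2 * ∑ ω, u ω * (v ω - w ω)
      + ∑ ω, (u ω - v ω) ^ 2 := by
  rw [← sum_sub_distrib, mul_sum, ← sum_add_distrib, ← sum_add_distrib]
  exact sum_congr rfl fun ω _ => by ring

theorem rof_dual_le_primal {grad : (Ω → ℝ) → Ω → F} {dvg : (Ω → F) → Ω → ℝ}
    (hadj : ∀ u z, ∑ ω, inner ℝ (grad u ω) (z ω) = -∑ ω, u ω * dvg z ω)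
    {lam : ℝ} (hlam : 0 ≤ lam) (w : Ω → ℝ) {z : Ω → F} (hz : ∀ ω, ‖z ω‖ ≤ 1) (u : Ω → ℝ) :
    (1 / 2) * (∑ ω, w ω ^ 2 - ∑ ω, (w + lam • dvg z) ω ^ 2)
      ≤ (1 / 2) * ∑ ω, (w ω - u ω) ^ 2 + lam * ∑ ω, ‖grad u ω‖ := by
  set v := w + lam • dvg z
  have hpair : ∑ ω, u ω * (v ω - w ω) = lam * ∑ ω, u ω * dvg z ω := by
    rw [mul_sum]
    refine sum_congr rfl fun ω _ => ?_
    simp only [v, Pi.add_apply, Pi.smul_apply, smul_eq_mul]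
    ring
  have hdual : -∑ ω, u ω * dvg z ω ≤ ∑ ω, ‖grad u ω‖ :=
    hadj u z ▸ sum_inner_le_sum_norm (grad u) z hz
  have hsq : 0 ≤ ∑ ω, (u ω - v ω) ^ 2 := sum_nonneg fun ω _ => sq_nonneg _
  rw [sum_sub_sq_eq w u v, hpair]
  linarith [mul_le_mul_of_nonneg_left hdual hlam]

end WeakDuality

theorem rof_eps_optimality_general (Ω : Type*) [Fintype Ω]
    (grad : (Ω → ℝ) →ₗ[ℝ] (Ω → EuclideanSpace ℝ (Fin 3)))
    (dvg : (Ω → EuclideanSpace ℝ (Fin 3)) →ₗ[ℝ] (Ω → ℝ))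
    (hadj : ∀ (v : Ω → ℝ) (z : Ω → EuclideanSpace ℝ (Fin 3)),
      ∑ ω : Ω, (inner ℝ (grad v ω) (z ω) : ℝ) = - ∑ ω : Ω, v ω * dvg z ω)
    (lam : ℝ) (hlam : 0 < lam) (ε : ℝ) (w : Ω → ℝ)
    (TV : (Ω → ℝ) → ℝ) (hTV : ∀ v, TV v = ∑ ω : Ω, ‖grad v ω‖)
    (P : (Ω → ℝ) → ℝ)
    (hP : ∀ v, P v = (1 / 2) * ∑ ω : Ω, (w ω - v ω) ^ 2 + lam * TV v)
    (z : Ω → EuclideanSpace ℝ (Fin 3)) (hz : ∀ ω, ‖z ω‖ ≤ 1)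
    (v : Ω → ℝ) (hv : v = w + lam • dvg z) :
    (1 / 2) * (∑ ω : Ω, (w ω) ^ 2 - ∑ ω : Ω, (v ω) ^ 2) ≤ P v ∧
    (P v - (1 / 2) * (∑ ω : Ω, (w ω) ^ 2 - ∑ ω : Ω, (v ω) ^ 2) ≤ ε →
      ∀ u : Ω → ℝ, P v ≤ P u + ε) := by
  have hweak : ∀ u, (1 / 2) * (∑ ω, w ω ^ 2 - ∑ ω, v ω ^ 2) ≤ P u := fun u => by
    rw [hP, hTV, hv]
    exact rof_dual_le_primal (grad := grad) (dvg := dvg) hadj hlam.le w hz u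
  exact ⟨hweak v, fun hgap u => by linarith [hweak u]⟩

/-- For any `z ∈ K` and `v = w + λ div z`, one has
`½‖w − v‖² + λ TV(v) ≥ ½(‖w‖² − ‖v‖²)`; hence if the duality gap
`δ(v) = ½‖w−v‖² + λTV(v) − ½(‖w‖² − ‖v‖²)` is at most `ε`, then `v` is an
`ε`-optimal solution of the ROF problem. -/
theorem rof_eps_optimality (Ω : Type*) [Fintype Ω]
    (grad : (Ω → ℝ) →ₗ[ℝ] (Ω → EuclideanSpace ℝ (Fin 3)))
    (dvg : (Ω → EuclideanSpace ℝ (Fin 3)) →ₗ[ℝ] (Ω → ℝ))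
    (hadj : ∀ (v : Ω → ℝ) (z : Ω → EuclideanSpace ℝ (Fin 3)),
      ∑ ω : Ω, (inner ℝ (grad v ω) (z ω) : ℝ) = - ∑ ω : Ω, v ω * dvg z ω)
    (lam : ℝ) (hlam : 0 < lam) (ε : ℝ) (hε : 0 < ε) (w : Ω → ℝ)
    (TV : (Ω → ℝ) → ℝ) (hTV : ∀ v, TV v = ∑ ω : Ω, ‖grad v ω‖)
    (P : (Ω → ℝ) → ℝ)
    (hP : ∀ v, P v = (1 / 2) * ∑ ω : Ω, (w ω - v ω) ^ 2 + lam * TV v)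
    (z : Ω → EuclideanSpace ℝ (Fin 3)) (hz : ∀ ω, ‖z ω‖ ≤ 1)
    (v : Ω → ℝ) (hv : v = w + lam • dvg z) :
    (1 / 2) * (∑ ω : Ω, (w ω) ^ 2 - ∑ ω : Ω, (v ω) ^ 2) ≤ P v ∧
    (P v - (1 / 2) * (∑ ω : Ω, (w ω) ^ 2 - ∑ ω : Ω, (v ω) ^ 2) ≤ ε →
      ∀ u : Ω → ℝ, P v ≤ P u + ε) :=
  rof_eps_optimality_general Ω grad dvg hadj lam hlam ε w TV hTV P hP z hz v hv
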